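/- Let k¹, k² ∈ Z² \ {0} be linearly independent over R, and set K = {k¹, k², -k¹, -k²}. For each k ∈ K define the vector field on T² × S¹ by V_k(x,v) = (e_k(x) γ_k, (k · v) e_{-k}(x) Π_v γ_k), where γ_k = -k^⊥/|k|², e_k is the real Fourier basis, and Π_v = Id - v⊗v is the orthogonal projection onto v^⊥ (identifying T_v S¹ with v^⊥ ⊂ R²). Then for every (x,v) ∈ T² × S¹, span{V_k(x,v) : k ∈ K} = T_x T² × T_v S¹, i.e. these four vectors span the full 3-dimensional tangent space. -/

import Mathlib

open scoped RealInnerProductSpace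

noncomputable section

abbrev E2 := EuclideanSpace ℝ (Fin 2)

def vec2 (a b : ℝ) : E2 := (WithLp.equiv 2 (Fin 2 → ℝ)).symm ![a, b]

/-- The real Fourier basis: `sin(k·x)` for `k ∈ ℤ²₊` and `cos(k·x)` for `k ∈ ℤ²₋`. -/
def eFun (k : ℤ × ℤ) (x : E2) : ℝ :=
  if 0 < k.2 ∨ (0 < k.1 ∧ k.2 = 0) then Real.sin ((k.1 : ℝ) * x 0 + (k.2 : ℝ) * x 1)
  else Real.cos ((k.1 : ℝ) * x 0 + (k.2 : ℝ) * x 1)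

/-- `γ_k = -k^⊥/|k|²`. -/
def gammaVec (k : ℤ × ℤ) : E2 :=
  (((k.1 : ℝ) ^ 2 + (k.2 : ℝ) ^ 2)⁻¹) • vec2 (k.2 : ℝ) (-(k.1 : ℝ))

/-- `Π_v w = w - ⟨v,w⟩v`, the orthogonal projection onto `v^⊥`. -/
def projPerp (v w : E2) : E2 := w - ⟪v, w⟫ • v

/-- `V_k(x,v) = (e_k(x) γ_k, (k·v) e_{-k}(x) Π_v γ_k)`. -/
def Vfield (k : ℤ × ℤ) (x v : E2) : E2 × E2 :=
  (eFun k x • gammaVec k,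
    (((k.1 : ℝ) * v 0 + (k.2 : ℝ) * v 1) * eFun (-k) x) • projPerp v (gammaVec k))

end

section Aux

lemma innerE2 (u w : E2) : ⟪u, w⟫ = u 0 * w 0 + u 1 * w 1 := by
  simp [PiLp.inner_apply, RCLike.inner_apply, Fin.sum_univ_two]
  ring

lemma vec2_apply0 (a b : ℝ) : vec2 a b 0 = a := by simp [vec2]
lemma vec2_apply1 (a b : ℝ) : vec2 a b 1 = b := by simp [vec2]

lemma E2_smul_apply (r : ℝ) (w : E2) (i : Fin 2) : (r • w) i = r * w i := rfl
lemma E2_sub_apply (u w : E2) (i : Fin 2) : (u - w) i = u i - w i := rfl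
lemma E2_add_apply (u w : E2) (i : Fin 2) : (u + w) i = u i + w i := rfl
lemma E2_zero_apply (i : Fin 2) : (0 : E2) i = 0 := rfl

lemma gamma_apply0 (k : ℤ × ℤ) :
    gammaVec k 0 = (((k.1 : ℝ) ^ 2 + (k.2 : ℝ) ^ 2)⁻¹) * (k.2 : ℝ) := by
  rw [gammaVec, E2_smul_apply, vec2_apply0]

lemma gamma_apply1 (k : ℤ × ℤ) :
    gammaVec k 1 = (((k.1 : ℝ) ^ 2 + (k.2 : ℝ) ^ 2)⁻¹) * (-(k.1 : ℝ)) := by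
  rw [gammaVec, E2_smul_apply, vec2_apply1]

lemma vec2_neg (a b : ℝ) : vec2 (-a) (-b) = - vec2 a b := by
  ext i; fin_cases i <;> simp [vec2]

lemma E2_neg_apply (u : E2) (i : Fin 2) : (-u) i = -(u i) := rfl

lemma E2_ext (u w : E2) (h0 : u 0 = w 0) (h1 : u 1 = w 1) : u = w := by
  ext i
  fin_cases i
  · exact h0
  · exact h1

lemma gammaVec_neg (k : ℤ × ℤ) : gammaVec (-k) = - gammaVec k := by
  apply E2_ext <;>
    simp only [gamma_apply0, gamma_apply1, E2_neg_apply,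
      show (-k).1 = -k.1 from rfl, show (-k).2 = -k.2 from rfl, Int.cast_neg, neg_sq] <;>
    ring

lemma projPerp_neg (v w : E2) : projPerp v (-w) = - projPerp v w := by
  simp only [projPerp, inner_neg_right]; module

lemma normsq_pos (k : ℤ × ℤ) (hk : k ≠ 0) : (0:ℝ) < (k.1 : ℝ) ^ 2 + (k.2 : ℝ) ^ 2 := by
  have hk' : ¬(k.1 = 0 ∧ k.2 = 0) := by simpa [Prod.ext_iff] using hk
  rcases not_and_or.1 hk' with h | h
  · have : ((k.1 : ℝ)) ≠ 0 := Int.cast_ne_zero.2 h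
    positivity
  · have : ((k.2 : ℝ)) ≠ 0 := Int.cast_ne_zero.2 h
    positivity

lemma eFun_sq (k : ℤ × ℤ) (hk : k ≠ 0) (x : E2) :
    eFun k x ^ 2 + eFun (-k) x ^ 2 = 1 := by
  have hk' : ¬(k.1 = 0 ∧ k.2 = 0) := by simpa [Prod.ext_iff] using hk
  unfold eFun
  simp only [show (-k).1 = -k.1 from rfl, show (-k).2 = -k.2 from rfl, Int.cast_neg]
  by_cases h : 0 < k.2 ∨ (0 < k.1 ∧ k.2 = 0)
  · have h' : ¬(0 < -k.2 ∨ (0 < -k.1 ∧ -k.2 = 0)) := by omega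
    rw [if_pos h, if_neg h',
      show -(k.1:ℝ) * x 0 + -(k.2:ℝ) * x 1 = -((k.1:ℝ) * x 0 + (k.2:ℝ) * x 1) by ring,
      Real.cos_neg]
    exact Real.sin_sq_add_cos_sq _
  · have h' : (0 < -k.2 ∨ (0 < -k.1 ∧ -k.2 = 0)) := by omega
    rw [if_neg h, if_pos h',
      show -(k.1:ℝ) * x 0 + -(k.2:ℝ) * x 1 = -((k.1:ℝ) * x 0 + (k.2:ℝ) * x 1) by ring,
      Real.sin_neg, neg_sq]
    exact Real.cos_sq_add_sin_sq _

lemma Vfield_neg (k : ℤ × ℤ) (x v : E2) :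
    Vfield (-k) x v = ((-(eFun (-k) x)) • gammaVec k,
      (((k.1 : ℝ) * v 0 + (k.2 : ℝ) * v 1) * eFun k x) • projPerp v (gammaVec k)) := by
  unfold Vfield
  rw [neg_neg, gammaVec_neg, projPerp_neg]
  simp only [show (-k).1 = -k.1 from rfl, show (-k).2 = -k.2 from rfl, Int.cast_neg]
  exact Prod.ext_iff.mpr ⟨by module, by module⟩

lemma mem_gamma (k : ℤ × ℤ) (hk : k ≠ 0) (x v : E2) :
    (gammaVec k, (0:E2)) ∈
      Submodule.span ℝ ({Vfield k x v, Vfield (-k) x v} : Set (E2 × E2)) := by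
  have hA : Vfield k x v ∈
      Submodule.span ℝ ({Vfield k x v, Vfield (-k) x v} : Set (E2 × E2)) :=
    Submodule.subset_span (by simp)
  have hB : Vfield (-k) x v ∈
      Submodule.span ℝ ({Vfield k x v, Vfield (-k) x v} : Set (E2 × E2)) :=
    Submodule.subset_span (by simp)
  have hab := eFun_sq k hk x
  have e1 : (gammaVec k, (0:E2)) =
      eFun k x • Vfield k x v - eFun (-k) x • Vfield (-k) x v := by
    rw [Vfield_neg]
    unfold Vfield
    simp only [Prod.smul_mk, Prod.mk_sub_mk, Prod.mk.injEq]
    constructor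
    · match_scalars
      linear_combination -hab
    · match_scalars
      ring
  rw [e1]
  exact sub_mem (Submodule.smul_mem _ _ hA) (Submodule.smul_mem _ _ hB)

lemma mem_proj (k : ℤ × ℤ) (hk : k ≠ 0) (x v : E2) :
    ((0:E2), ((k.1 : ℝ) * v 0 + (k.2 : ℝ) * v 1) • projPerp v (gammaVec k)) ∈
      Submodule.span ℝ ({Vfield k x v, Vfield (-k) x v} : Set (E2 × E2)) := by
  have hA : Vfield k x v ∈
      Submodule.span ℝ ({Vfield k x v, Vfield (-k) x v} : Set (E2 × E2)) :=
    Submodule.subset_span (by simp)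
  have hB : Vfield (-k) x v ∈
      Submodule.span ℝ ({Vfield k x v, Vfield (-k) x v} : Set (E2 × E2)) :=
    Submodule.subset_span (by simp)
  have hab := eFun_sq k hk x
  have e2 : ((0:E2), ((k.1 : ℝ) * v 0 + (k.2 : ℝ) * v 1) • projPerp v (gammaVec k)) =
      eFun (-k) x • Vfield k x v + eFun k x • Vfield (-k) x v := by
    rw [Vfield_neg]
    unfold Vfield
    simp only [Prod.smul_mk, Prod.mk_add_mk, Prod.mk.injEq]
    constructor
    · match_scalars
      ring
    · match_scalars
      linear_combination (-((k.1 : ℝ) * v 0 + (k.2 : ℝ) * v 1)) * hab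
  rw [e2]
  exact add_mem (Submodule.smul_mem _ _ hA) (Submodule.smul_mem _ _ hB)

lemma inner_v_proj (v w : E2) (hvv : ⟪v, v⟫ = 1) : ⟪v, projPerp v w⟫ = 0 := by
  rw [projPerp, inner_sub_right, real_inner_smul_right, hvv, mul_one, sub_self]

lemma perp_repr (v w : E2) (hvv : ⟪v, v⟫ = 1) (hw : ⟪v, w⟫ = 0) :
    w = ⟪vec2 (-(v 1)) (v 0), w⟫ • vec2 (-(v 1)) (v 0) := by
  rw [innerE2] at hvv hw
  rw [innerE2]
  apply E2_ext <;>
    simp only [E2_smul_apply, vec2_apply0, vec2_apply1]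
  · linear_combination (v 0) * hw - (w 0) * hvv
  · linear_combination (v 1) * hw - (w 1) * hvv

lemma inner_p_proj (k : ℤ × ℤ) (v : E2) :
    ⟪vec2 (-(v 1)) (v 0), projPerp v (gammaVec k)⟫ =
      -((((k.1 : ℝ) ^ 2 + (k.2 : ℝ) ^ 2)⁻¹)) * ((k.1 : ℝ) * v 0 + (k.2 : ℝ) * v 1) := by
  simp only [innerE2, projPerp, E2_sub_apply, E2_smul_apply, vec2_apply0, vec2_apply1,
    gamma_apply0, gamma_apply1]
  ring

lemma key (k : ℤ × ℤ) (hk : k ≠ 0) (x v : E2) (hvv : ⟪v, v⟫ = 1)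
    (hd : (k.1 : ℝ) * v 0 + (k.2 : ℝ) * v 1 ≠ 0) :
    ((0:E2), vec2 (-(v 1)) (v 0)) ∈
      Submodule.span ℝ ({Vfield k x v, Vfield (-k) x v} : Set (E2 × E2)) := by
  set d : ℝ := (k.1 : ℝ) * v 0 + (k.2 : ℝ) * v 1 with hd_def
  set P : E2 := projPerp v (gammaVec k) with hP_def
  set p : E2 := vec2 (-(v 1)) (v 0) with hp_def
  have h0 : ((0:E2), d • P) ∈
      Submodule.span ℝ ({Vfield k x v, Vfield (-k) x v} : Set (E2 × E2)) :=
    mem_proj k hk x v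
  have hip : ⟪p, P⟫ = -((((k.1 : ℝ) ^ 2 + (k.2 : ℝ) ^ 2)⁻¹)) * d := inner_p_proj k v
  have hc : (((k.1 : ℝ) ^ 2 + (k.2 : ℝ) ^ 2)⁻¹) ≠ 0 := by
    have := normsq_pos k hk; positivity
  have hs : d * ⟪p, P⟫ ≠ 0 := by
    rw [hip]
    intro h
    apply hd
    rcases mul_eq_zero.1 h with h' | h'
    · exact h'
    · rcases mul_eq_zero.1 h' with h'' | h''
      · exact absurd h'' (by simpa using hc)
      · exact h''
  have hPrep : P = ⟪p, P⟫ • p :=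
    perp_repr v P hvv (inner_v_proj v (gammaVec k) hvv)
  set t : ℝ := ⟪p, P⟫ with ht_def
  have e3 : ((0:E2), p) = (d * t)⁻¹ • ((0:E2), d • P) := by
    rw [Prod.smul_mk, Prod.mk.injEq]
    constructor
    · rw [smul_zero]
    · rw [hPrep, smul_smul, smul_smul, mul_assoc, inv_mul_cancel₀ hs, one_smul]
  rw [e3]
  exact Submodule.smul_mem _ _ h0

lemma gamma_span (k1 k2 : ℤ × ℤ) (h1 : k1 ≠ 0) (h2 : k2 ≠ 0)
    (hind : k1.1 * k2.2 - k1.2 * k2.1 ≠ 0) (w : E2) :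
    ∃ α β : ℝ, α • gammaVec k1 + β • gammaVec k2 = w := by
  have hn1 : ((k1.1 : ℝ) ^ 2 + (k1.2 : ℝ) ^ 2) ≠ 0 := (normsq_pos k1 h1).ne'
  have hn2 : ((k2.1 : ℝ) ^ 2 + (k2.2 : ℝ) ^ 2) ≠ 0 := (normsq_pos k2 h2).ne'
  have hD : ((k1.1 : ℝ) * (k2.2 : ℝ) - (k1.2 : ℝ) * (k2.1 : ℝ)) ≠ 0 := by
    have : ((k1.1 * k2.2 - k1.2 * k2.1 : ℤ) : ℝ) ≠ 0 := Int.cast_ne_zero.2 hind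
    push_cast at this; exact this
  refine ⟨((k1.1 : ℝ) ^ 2 + (k1.2 : ℝ) ^ 2) *
      (w 0 * (-(k2.1 : ℝ)) - w 1 * (k2.2 : ℝ)) /
      ((k1.1 : ℝ) * (k2.2 : ℝ) - (k1.2 : ℝ) * (k2.1 : ℝ)),
    ((k2.1 : ℝ) ^ 2 + (k2.2 : ℝ) ^ 2) *
      ((k1.2 : ℝ) * w 1 + (k1.1 : ℝ) * w 0) /
      ((k1.1 : ℝ) * (k2.2 : ℝ) - (k1.2 : ℝ) * (k2.1 : ℝ)), ?_⟩
  apply E2_ext <;>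
    simp only [E2_add_apply, E2_smul_apply, gamma_apply0, gamma_apply1] <;>
    field_simp <;> ring

end Aux

/-- Spanning condition on the tangent bundle: for linearly independent `k¹, k²` and
`K = {k¹, k², -k¹, -k²}`, the four vectors `V_k(x,v)`, `k ∈ K`, span the full tangent
space `T_x T² × T_v S¹ = ℝ² × v^⊥` at every `(x,v)`. -/
theorem tangent_bundle_spanning (k1 k2 : ℤ × ℤ) (h1 : k1 ≠ 0) (h2 : k2 ≠ 0)
    (hind : k1.1 * k2.2 - k1.2 * k2.1 ≠ 0) (x v : E2) (hv : ‖v‖ = 1) :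
    Submodule.span ℝ
        ({Vfield k1 x v, Vfield k2 x v, Vfield (-k1) x v, Vfield (-k2) x v} : Set (E2 × E2))
      = (⊤ : Submodule ℝ E2).prod ((Submodule.span ℝ {v})ᗮ) := by
  have hvv : ⟪v, v⟫ = 1 := by
    rw [real_inner_self_eq_norm_sq, hv]; norm_num
  set S := Submodule.span ℝ
      ({Vfield k1 x v, Vfield k2 x v, Vfield (-k1) x v, Vfield (-k2) x v} : Set (E2 × E2))
    with hS_def
  apply le_antisymm
  · rw [Submodule.span_le]
    have hmem : ∀ k : ℤ × ℤ,
        Vfield k x v ∈ (⊤ : Submodule ℝ E2).prod ((Submodule.span ℝ {v})ᗮ) := by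
      intro k
      refine Submodule.mem_prod.2 ⟨trivial, ?_⟩
      rw [Submodule.mem_orthogonal_singleton_iff_inner_right]
      show ⟪v, (((k.1 : ℝ) * v 0 + (k.2 : ℝ) * v 1) * eFun (-k) x) • projPerp v (gammaVec k)⟫ = 0
      rw [real_inner_smul_right, inner_v_proj v _ hvv, mul_zero]
    rintro u hu
    simp only [Set.mem_insert_iff, Set.mem_singleton_iff] at hu
    rcases hu with h | h | h | h <;> (subst h; exact hmem _)
  · rintro ⟨w1, w2⟩ hw
    rw [Submodule.mem_prod] at hw
    obtain ⟨-, hw2⟩ := hw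
    rw [Submodule.mem_orthogonal_singleton_iff_inner_right] at hw2
    have sub1 : Submodule.span ℝ ({Vfield k1 x v, Vfield (-k1) x v} : Set (E2 × E2)) ≤ S :=
      Submodule.span_mono (by intro y hy; simp only [Set.mem_insert_iff,
        Set.mem_singleton_iff] at hy ⊢; tauto)
    have sub2 : Submodule.span ℝ ({Vfield k2 x v, Vfield (-k2) x v} : Set (E2 × E2)) ≤ S :=
      Submodule.span_mono (by intro y hy; simp only [Set.mem_insert_iff,
        Set.mem_singleton_iff] at hy ⊢; tauto)
    -- not both d1 d2 vanish
    have hd : ((k1.1 : ℝ) * v 0 + (k1.2 : ℝ) * v 1 ≠ 0) ∨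
        ((k2.1 : ℝ) * v 0 + (k2.2 : ℝ) * v 1 ≠ 0) := by
      by_contra hcon
      push_neg at hcon
      obtain ⟨hd1, hd2⟩ := hcon
      have hD : ((k1.1 : ℝ) * (k2.2 : ℝ) - (k1.2 : ℝ) * (k2.1 : ℝ)) ≠ 0 := by
        have : ((k1.1 * k2.2 - k1.2 * k2.1 : ℤ) : ℝ) ≠ 0 := Int.cast_ne_zero.2 hind
        push_cast at this; exact this
      have hv0 : v 0 = 0 := by
        have h0 : ((k1.1 : ℝ) * (k2.2 : ℝ) - (k1.2 : ℝ) * (k2.1 : ℝ)) * v 0 = 0 := by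
          linear_combination (k2.2 : ℝ) * hd1 - (k1.2 : ℝ) * hd2
        exact (mul_eq_zero.1 h0).resolve_left hD
      have hv1 : v 1 = 0 := by
        have h0 : ((k1.1 : ℝ) * (k2.2 : ℝ) - (k1.2 : ℝ) * (k2.1 : ℝ)) * v 1 = 0 := by
          linear_combination (k1.1 : ℝ) * hd2 - (k2.1 : ℝ) * hd1
        exact (mul_eq_zero.1 h0).resolve_left hD
      rw [innerE2, hv0, hv1] at hvv
      norm_num at hvv
    have hp : ((0:E2), vec2 (-(v 1)) (v 0)) ∈ S := by
      rcases hd with h | h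
      · exact sub1 (key k1 h1 x v hvv h)
      · exact sub2 (key k2 h2 x v hvv h)
    have hg1 : (gammaVec k1, (0:E2)) ∈ S := sub1 (mem_gamma k1 h1 x v)
    have hg2 : (gammaVec k2, (0:E2)) ∈ S := sub2 (mem_gamma k2 h2 x v)
    have hmemw1 : (w1, (0:E2)) ∈ S := by
      obtain ⟨α, β, hab⟩ := gamma_span k1 k2 h1 h2 hind w1
      have e : (w1, (0:E2)) = α • (gammaVec k1, (0:E2)) + β • (gammaVec k2, (0:E2)) := by
        rw [Prod.smul_mk, Prod.smul_mk, Prod.mk_add_mk, Prod.mk.injEq]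
        exact ⟨hab.symm, by simp⟩
      rw [e]
      exact add_mem (Submodule.smul_mem _ _ hg1) (Submodule.smul_mem _ _ hg2)
    have hw2' : w2 = ⟪vec2 (-(v 1)) (v 0), w2⟫ • vec2 (-(v 1)) (v 0) :=
      perp_repr v w2 hvv hw2
    have e : (w1, w2) = (w1, (0:E2)) +
        ⟪vec2 (-(v 1)) (v 0), w2⟫ • ((0:E2), vec2 (-(v 1)) (v 0)) := by
      rw [Prod.smul_mk, Prod.mk_add_mk, Prod.mk.injEq]
      exact ⟨by simp, by rw [zero_add, ← hw2']⟩
    rw [e]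
    exact add_mem hmemw1 (Submodule.smul_mem _ _ hp)
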